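/- arXiv:2408.11368 — 5 statements merged into one kernel-verified Lean document; each statement's English description precedes it below -/
import Mathlib

section
/- Every finite simple graph H on n vertices with girth at least 2δ+1 (for an integer δ ≥ 1) has at most 2·n^(1+1/δ) edges. -/
/-!
If a graph has more than `d n` edges, repeatedly deleting a vertex of degree at most `d` leaves
a nonempty subgraph in which every non-isolated vertex has degree greater than `d`. When the girth
exceeds `2δ`, the paths of length `k ≤ δ` ending at a fixed non-isolated vertex of that subgraph
number at least `d ^ k`: a path extends at its start by every neighbour other than its second
vertex. Paths of length `δ` are determined by their starting vertex, so `d ^ δ ≤ n`. The choice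
`d = ⌊2 n ^ (1 / δ)⌋ > n ^ (1 / δ)` makes this impossible.
-/

open Finset

namespace SimpleGraph

variable {V : Type*} {G : SimpleGraph V}

theorem Walk.IsPath.eq_of_length_add_length_lt_egirth {u v : V} {p q : G.Walk u v}
    (hp : p.IsPath) (hq : q.IsPath) (hlt : (p.length + q.length : ℕ∞) < G.egirth) : p = q := by
  by_contra hne
  obtain ⟨w, -, -, c, hc, hlen⟩ := hp.exists_isCycle_length_le_add_of_ne hq hne
  exact hlt.not_ge ((egirth_le_length hc).trans (by exact_mod_cast hlen))

theorem Walk.IsPath.eq_snd_of_adj_of_mem_support [DecidableEq V] {u v w : V} {p : G.Walk u v}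
    (hp : p.IsPath) (hadj : G.Adj u w) (hw : w ∈ p.support)
    (hlt : (p.length + 1 : ℕ∞) < G.egirth) : w = p.snd := by
  have hedge : p.takeUntil w hw = .cons hadj .nil := by
    refine (hp.takeUntil hw).eq_of_length_add_length_lt_egirth (.of_adj hadj)
      (lt_of_le_of_lt ?_ hlt)
    have := p.length_takeUntil_le_length hw
    simp only [Walk.length_cons, Walk.length_nil, zero_add]
    exact_mod_cast Nat.add_le_add_right this 1
  have := p.getVert_length_takeUntil hw
  rw [hedge] at this
  simpa using this.symm

section PathCounting

variable [Fintype V] [DecidableEq V] [DecidableRel G.Adj]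

variable (G) in
def pathsOfLengthTo (v : V) (k : ℕ) : Finset (Σ u, G.Walk u v) :=
  univ.sigma fun u => {p ∈ G.finsetWalkLength k u v | p.IsPath}

theorem mem_pathsOfLengthTo {v : V} {k : ℕ} {x : Σ u, G.Walk u v} :
    x ∈ G.pathsOfLengthTo v k ↔ x.2.IsPath ∧ x.2.length = k := by
  simp [pathsOfLengthTo, mem_finsetWalkLength_iff, and_comm]

theorem card_pathsOfLengthTo_le_card {v : V} {k : ℕ} (hk : (2 * k : ℕ∞) < G.egirth) :
    #(G.pathsOfLengthTo v k) ≤ Fintype.card V := by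
  refine card_le_card_of_injOn Sigma.fst (fun _ _ => mem_coe.2 (mem_univ _)) ?_
  rintro ⟨u, p⟩ hp ⟨u', q⟩ hq (rfl : u = u')
  simp only [mem_coe, mem_pathsOfLengthTo] at hp hq
  rw [hp.1.eq_of_length_add_length_lt_egirth hq.1 (by rw [hp.2, hq.2, ← two_mul]; exact hk)]

theorem card_pathsOfLengthTo_mul_le {v : V} {d k : ℕ} (hk : (k + 1 : ℕ∞) < G.egirth)
    (hdeg : ∀ u, G.Reachable u v → d < G.degree u) :
    #(G.pathsOfLengthTo v k) * d ≤ #(G.pathsOfLengthTo v (k + 1)) := by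
  classical
  refine (card_mul_le_card_mul (m := d) (n := 1)
    (fun (x y : Σ u, G.Walk u v) => ∃ h : G.Adj y.1 x.1, y.2 = .cons h x.2) ?_ ?_).trans_eq
    (mul_one _)
  · rintro ⟨u, p⟩ hx
    rw [mem_pathsOfLengthTo] at hx
    calc d ≤ #(G.neighborFinset u \ {p.snd}) := by
          have := le_card_sdiff {p.snd} (G.neighborFinset u)
          rw [card_singleton, card_neighborFinset_eq_degree] at this
          have := hdeg u p.reachable
          omega
      _ ≤ _ := by
        refine card_le_card_of_surjOn Sigma.fst fun w hw => ?_
        simp only [coe_sdiff, coe_singleton, Set.mem_sdiff, mem_coe, mem_neighborFinset,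
          Set.mem_singleton_iff] at hw
        obtain ⟨hadj, hsnd⟩ := hw
        have hw : w ∉ p.support := fun hw =>
          hsnd (hx.1.eq_snd_of_adj_of_mem_support hadj hw (by rw [hx.2]; exact hk))
        refine ⟨⟨w, .cons hadj.symm p⟩, ?_, rfl⟩
        simp [bipartiteAbove, mem_pathsOfLengthTo, hx.1.cons hw, hx.2, hadj.symm]
  · rintro ⟨w, q⟩ -
    refine card_le_one.2 ?_
    rintro ⟨u, p⟩ hp ⟨u', p'⟩ hp'
    simp only [bipartiteBelow, mem_filter] at hp hp'
    obtain ⟨-, _, hq⟩ := hp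
    obtain ⟨-, _, hq'⟩ := hp'
    obtain ⟨rfl, hpp'⟩ := (Walk.cons.injEq ..).mp (hq.symm.trans hq')
    rw [eq_of_heq hpp']

theorem pow_le_card_of_le_egirth {d δ : ℕ} (hg : (2 * δ + 1 : ℕ∞) ≤ G.egirth) (v : V)
    (hdeg : ∀ u, G.Reachable u v → d < G.degree u) : d ^ δ ≤ Fintype.card V := by
  have hpaths : ∀ k ≤ δ, d ^ k ≤ #(G.pathsOfLengthTo v k) := by
    intro k
    induction k with
    | zero =>
      intro _
      exact card_pos.2 ⟨⟨v, .nil⟩, mem_pathsOfLengthTo.2 ⟨.nil, rfl⟩⟩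
    | succ k ih =>
      intro hk
      calc d ^ (k + 1) = d ^ k * d := pow_succ d k
        _ ≤ #(G.pathsOfLengthTo v k) * d := Nat.mul_le_mul_right d (ih (by omega))
        _ ≤ _ := card_pathsOfLengthTo_mul_le (lt_of_lt_of_le (by norm_cast; omega) hg) hdeg
  exact (hpaths δ le_rfl).trans
    (card_pathsOfLengthTo_le_card (lt_of_lt_of_le (by norm_cast; omega) hg))

theorem exists_degree_le_of_card_lt_pow {d δ : ℕ} (hg : (2 * δ + 1 : ℕ∞) ≤ G.egirth)
    (hcard : Fintype.card V < d ^ δ) (hG : G ≠ ⊥) : ∃ v, 0 < G.degree v ∧ G.degree v ≤ d := by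
  by_contra! hlarge
  obtain ⟨v, w, hvw⟩ := ne_bot_iff_exists_adj.mp hG
  refine hcard.not_ge (G.pow_le_card_of_le_egirth hg v fun u hu => hlarge u ?_)
  rw [degree_pos_iff_mem_support]
  rcases eq_or_ne u v with rfl | huv
  · exact ⟨w, hvw⟩
  · exact mem_support_of_reachable huv hu

end PathCounting

theorem card_edgeFinset_le_mul_ncard_support [Fintype V] [DecidableEq V] (G : SimpleGraph V)
    [DecidableRel G.Adj] (d : ℕ)
    (hlow : ∀ H ≤ G, ∀ [DecidableRel H.Adj], H ≠ ⊥ → ∃ v, 0 < H.degree v ∧ H.degree v ≤ d) :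
    #G.edgeFinset ≤ d * G.support.ncard := by
  induction hm : #G.edgeFinset using Nat.strong_induction_on generalizing G with
  | _ m ih =>
  rcases eq_or_ne G ⊥ with rfl | hG
  · simp [← hm]
  obtain ⟨v, hv, hvd⟩ := hlow G le_rfl hG
  have hedges : #(G.deleteIncidenceSet v).edgeFinset + G.degree v = m := by
    rw [card_edgeFinset_deleteIncidenceSet, ← hm]
    have := G.degree_le_card_edgeFinset v
    omega
  have hsupport : (G.deleteIncidenceSet v).support.ncard + 1 ≤ G.support.ncard := by
    rw [← Set.ncard_sdiff_singleton_add_one ((degree_pos_iff_mem_support G v).mp hv)]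
    exact Nat.add_le_add_right (Set.ncard_le_ncard (support_deleteIncidenceSet_subset G v)) 1
  have hrest := ih _ (by omega) (G.deleteIncidenceSet v)
    (fun H hH => hlow H (hH.trans (G.deleteIncidenceSet_le v))) rfl
  calc m = #(G.deleteIncidenceSet v).edgeFinset + G.degree v := hedges.symm
    _ ≤ d * (G.deleteIncidenceSet v).support.ncard + d := Nat.add_le_add hrest hvd
    _ = d * ((G.deleteIncidenceSet v).support.ncard + 1) := by ring
    _ ≤ d * G.support.ncard := Nat.mul_le_mul_left d hsupport

end SimpleGraph

theorem lt_floor_two_mul_rpow_one_div_pow {n δ : ℕ} (hn : 0 < n) (hδ : δ ≠ 0) :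
    n < ⌊2 * (n : ℝ) ^ (1 / δ : ℝ)⌋₊ ^ δ := by
  set x := (n : ℝ) ^ (1 / δ : ℝ)
  have hx : 1 ≤ x := Real.one_le_rpow (by exact_mod_cast hn) (by positivity)
  have hxfloor : x < ⌊2 * x⌋₊ := by linarith [Nat.lt_floor_add_one (2 * x)]
  have hpow : x ^ δ = n := by
    simpa only [x, one_div] using Real.rpow_inv_natCast_pow n.cast_nonneg hδ
  exact_mod_cast hpow ▸ pow_lt_pow_left₀ hxfloor (by positivity) hδ

open SimpleGraph in
/-- Every finite simple graph `H` on `n` vertices with girth at least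
`2δ+1` (for an integer `δ ≥ 1`) has at most `2 · n^(1+1/δ)` edges. -/
theorem girth_sparsity {V : Type*} [Fintype V] (H : SimpleGraph V) (n δ : ℕ)
    (hn : Fintype.card V = n) (hδ : 1 ≤ δ)
    (hgirth : (2 * δ + 1 : ℕ∞) ≤ H.egirth) :
    (H.edgeSet.ncard : ℝ) ≤ 2 * (n : ℝ) ^ ((1 : ℝ) + 1 / δ) := by
  classical
  subst hn
  set x := (Fintype.card V : ℝ) ^ (1 / δ : ℝ)
  have hlow : ∀ G ≤ H, ∀ [DecidableRel G.Adj], G ≠ ⊥ →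
      ∃ v, 0 < G.degree v ∧ G.degree v ≤ ⌊2 * x⌋₊ := by
    intro G hGH _ hG
    obtain ⟨v, -⟩ := ne_bot_iff_exists_adj.mp hG
    have : Nonempty V := ⟨v⟩
    exact exists_degree_le_of_card_lt_pow (hgirth.trans (egirth_anti hGH))
      (lt_floor_two_mul_rpow_one_div_pow Fintype.card_pos (by omega)) hG
  calc (H.edgeSet.ncard : ℝ) = #H.edgeFinset := by rw [Set.ncard_eq_toFinset_card']; rfl
    _ ≤ ⌊2 * x⌋₊ * H.support.ncard := by
      exact_mod_cast H.card_edgeFinset_le_mul_ncard_support _ hlow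
    _ ≤ 2 * x * Fintype.card V := by
      gcongr
      · exact Nat.floor_le (by positivity)
      · exact_mod_cast H.support.ncard_le_card.trans_eq Nat.card_eq_fintype_card
    _ = 2 * (Fintype.card V : ℝ) ^ ((1 : ℝ) + 1 / δ) := by
      rw [mul_assoc, add_comm, Real.rpow_add_one' (by positivity) (by positivity)]
end

section
/- If every vertex of a finite simple graph H has degree at least d ≥ 2, and H has girth at least 2δ+1, then H contains at least 1 + d·∑_{i=0}^{δ-1} (d-1)^i ≥ (d-1)^δ vertices. -/
/-!
Fix a vertex `v` and let `S i` be the sphere of radius `i` around it. As long as `2 (i + 1)` is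
below the girth, the ball of radius `i + 1` around `v` is a tree: every vertex of `S i` has at
most one neighbour that is not in `S (i + 1)` (two such neighbours would close a short cycle
through `v`), and no vertex of `S (i + 1)` has two neighbours in `S i`. Hence
`|S (i + 1)| ≥ (d - 1) |S i|` and `|S 1| ≥ d`, and summing the spheres of radius `≤ δ`
gives the bound.
-/

open Finset

namespace SimpleGraph

variable {V : Type*} {G : SimpleGraph V} {u v w w₁ w₂ : V}

theorem Walk.IsPath.eq_of_length_add_lt_egirth {p q : G.Walk u v} (hp : p.IsPath)
    (hq : q.IsPath) (h : (p.length + q.length : ℕ∞) < G.egirth) : p = q := by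
  by_contra hne
  obtain ⟨_, -, -, c, hc, hlen⟩ := hp.exists_isCycle_length_le_add_of_ne hq hne
  exact h.not_ge <| (egirth_le_length hc).trans <| by exact_mod_cast hlen

theorem Walk.dist_lt_of_mem_support [DecidableEq V] {p : G.Walk u v}
    (hp : p.length = G.dist u v) (hw : w ∈ p.support) (hwv : w ≠ v) :
    G.dist u w < G.dist u v := by
  rw [← length_eq_dist_of_subwalk hp (p.isSubwalk_takeUntil hw), ← hp]
  exact length_takeUntil_lt_length hw hwv

/-- Shortest paths from `v` to `w₁` and `w₂`, extended to `u`, are two short paths from `v`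
to `u` that differ in their last edge. -/
theorem eq_of_adj_of_dist_le (hu : G.Reachable v u) (h₁ : G.Adj u w₁) (h₂ : G.Adj u w₂)
    (hle₁ : G.dist v w₁ ≤ G.dist v u) (hle₂ : G.dist v w₂ ≤ G.dist v u)
    (hgirth : (G.dist v w₁ + G.dist v w₂ + 2 : ℕ∞) < G.egirth) : w₁ = w₂ := by
  classical
  have extend : ∀ {w} (h : G.Adj u w), G.dist v w ≤ G.dist v u →
      ∃ p : G.Walk v u, p.IsPath ∧ p.length = G.dist v w + 1 ∧ p.penultimate = w := by
    intro w h hle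
    obtain ⟨p, hp, hlen⟩ := (hu.trans h.reachable).exists_path_of_dist
    have hup : u ∉ p.support := fun hmem =>
      (p.dist_lt_of_mem_support hlen hmem h.ne).not_ge hle
    exact ⟨p.concat h.symm, hp.concat hup h.symm, by simp [hlen], p.penultimate_concat h.symm⟩
  obtain ⟨p₁, hp₁, hl₁, rfl⟩ := extend h₁ hle₁
  obtain ⟨p₂, hp₂, hl₂, rfl⟩ := extend h₂ hle₂
  refine congrArg Walk.penultimate (hp₁.eq_of_length_add_lt_egirth hp₂ ?_)
  rw [hl₁, hl₂]
  push_cast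
  convert hgirth using 1
  ring

section Spheres

variable [Fintype V]

open Classical in
/-- Unreachable vertices, whose `dist` is the junk value `0`, are excluded. -/
noncomputable def distSphere (G : SimpleGraph V) (v : V) (i : ℕ) : Finset V :=
  {w | G.Reachable v w ∧ G.dist v w = i}

@[simp]
theorem mem_distSphere {i : ℕ} : w ∈ G.distSphere v i ↔ G.Reachable v w ∧ G.dist v w = i := by
  simp [distSphere]

theorem distSphere_zero : G.distSphere v 0 = {v} := by
  ext w
  simp only [mem_distSphere, mem_singleton]
  exact ⟨fun ⟨hr, h⟩ => (hr.dist_eq_zero_iff.mp h).symm, by rintro rfl; simp⟩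

theorem sum_card_distSphere_le_card [DecidableEq V] (n : ℕ) :
    ∑ i ∈ range n, #(G.distSphere v i) ≤ Fintype.card V := by
  rw [← card_biUnion fun i _ j _ hij => Finset.disjoint_left.mpr fun w hi hj =>
    hij ((mem_distSphere.mp hi).2.symm.trans (mem_distSphere.mp hj).2)]
  exact card_le_univ _

variable [DecidableRel G.Adj]

theorem degree_le_card_distSphere_one : G.degree v ≤ #(G.distSphere v 1) :=
  card_le_card fun w hw => by
    rw [mem_neighborFinset] at hw
    exact mem_distSphere.mpr ⟨hw.reachable, dist_eq_one_iff_adj.mpr hw⟩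

variable [DecidableEq V]

theorem degree_le_card_inter_distSphere_succ_add_one {i : ℕ} (hu : u ∈ G.distSphere v i)
    (hgirth : (2 * i + 2 : ℕ∞) < G.egirth) :
    G.degree u ≤ #(G.neighborFinset u ∩ G.distSphere v (i + 1)) + 1 := by
  obtain ⟨hr, rfl⟩ := mem_distSphere.mp hu
  have hback : #(G.neighborFinset u \ G.distSphere v (G.dist v u + 1)) ≤ 1 := by
    refine card_le_one.mpr fun w₁ hw₁ w₂ hw₂ => ?_
    simp only [mem_sdiff, mem_neighborFinset, mem_distSphere, not_and] at hw₁ hw₂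
    have hle : ∀ {w}, G.Adj u w → (G.Reachable v w → G.dist v w ≠ G.dist v u + 1) →
        G.dist v w ≤ G.dist v u := fun h hw => by
      have := h.diff_dist_adj (u := v)
      have := hw (hr.trans h.reachable)
      omega
    have hle₁ := hle hw₁.1 hw₁.2
    have hle₂ := hle hw₂.1 hw₂.2
    refine eq_of_adj_of_dist_le hr hw₁.1 hw₂.1 hle₁ hle₂ (lt_of_le_of_lt ?_ hgirth)
    norm_cast
    omega
  rw [← card_neighborFinset_eq_degree,
    ← card_sdiff_add_card_inter _ (G.distSphere v (G.dist v u + 1))]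
  omega

theorem pairwiseDisjoint_inter_distSphere_succ {i : ℕ} (hgirth : (2 * i + 2 : ℕ∞) < G.egirth) :
    (G.distSphere v i : Set V).PairwiseDisjoint
      fun u => G.neighborFinset u ∩ G.distSphere v (i + 1) := by
  intro u₁ hu₁ u₂ hu₂ hne
  refine Finset.disjoint_left.mpr fun w hw₁ hw₂ => ?_
  simp only [mem_inter, mem_neighborFinset, mem_distSphere, mem_coe] at hu₁ hu₂ hw₁ hw₂
  refine hne (eq_of_adj_of_dist_le hw₁.2.1 hw₁.1.symm hw₂.1.symm (by omega) (by omega) ?_)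
  rw [hu₁.2, hu₂.2]
  convert hgirth using 1
  ring

theorem mul_card_distSphere_le {d i : ℕ} (hdeg : ∀ u, d ≤ G.degree u)
    (hgirth : (2 * i + 2 : ℕ∞) < G.egirth) :
    (d - 1) * #(G.distSphere v i) ≤ #(G.distSphere v (i + 1)) := by
  calc (d - 1) * #(G.distSphere v i)
      ≤ ∑ u ∈ G.distSphere v i, #(G.neighborFinset u ∩ G.distSphere v (i + 1)) := by
        rw [mul_comm, ← smul_eq_mul, ← sum_const]
        refine sum_le_sum fun u hu => ?_
        have := degree_le_card_inter_distSphere_succ_add_one hu hgirth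
        have := hdeg u
        omega
    _ = #((G.distSphere v i).biUnion fun u => G.neighborFinset u ∩ G.distSphere v (i + 1)) :=
        (card_biUnion (pairwiseDisjoint_inter_distSphere_succ hgirth)).symm
    _ ≤ #(G.distSphere v (i + 1)) :=
        card_le_card <| biUnion_subset.mpr fun _ _ => inter_subset_right

theorem mul_pow_le_card_distSphere {d k : ℕ} (hdeg : ∀ u, d ≤ G.degree u)
    (hgirth : (2 * k + 2 : ℕ∞) < G.egirth) : d * (d - 1) ^ k ≤ #(G.distSphere v (k + 1)) := by
  induction k with
  | zero => simpa using (hdeg v).trans degree_le_card_distSphere_one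
  | succ k ih =>
    calc d * (d - 1) ^ (k + 1) = (d - 1) * (d * (d - 1) ^ k) := by ring
      _ ≤ (d - 1) * #(G.distSphere v (k + 1)) :=
        Nat.mul_le_mul_left _ <|
          ih (lt_of_le_of_lt (by push_cast; gcongr; exact le_self_add) hgirth)
      _ ≤ #(G.distSphere v (k + 2)) := mul_card_distSphere_le hdeg hgirth

end Spheres

/-- The Moore bound `1 + d ∑_{i<δ} (d-1)^i`: the size of a ball of radius `δ` in the
`d`-regular tree. -/
def mooreBound (d δ : ℕ) : ℕ := 1 + d * ∑ i ∈ range δ, (d - 1) ^ i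

theorem pow_le_mooreBound (d δ : ℕ) : (d - 1) ^ δ ≤ mooreBound d δ :=
  calc (d - 1) ^ δ ≤ ∑ i ∈ range (δ + 1), (d - 1) ^ i :=
        single_le_sum (f := ((d - 1) ^ ·)) (fun _ _ => Nat.zero_le _) (self_mem_range_succ δ)
    _ = 1 + (d - 1) * ∑ i ∈ range δ, (d - 1) ^ i := by rw [geom_sum_succ, add_comm]
    _ ≤ mooreBound d δ := by unfold mooreBound; gcongr; omega

theorem mooreBound_le_card [Fintype V] [Nonempty V] [DecidableRel G.Adj] {d δ : ℕ}
    (hdeg : ∀ u, d ≤ G.degree u) (hgirth : (2 * δ + 1 : ℕ∞) ≤ G.egirth) :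
    mooreBound d δ ≤ Fintype.card V := by
  classical
  obtain ⟨v⟩ := ‹Nonempty V›
  calc mooreBound d δ = #(G.distSphere v 0) + ∑ i ∈ range δ, d * (d - 1) ^ i := by
        rw [distSphere_zero, card_singleton, mooreBound, mul_sum]
    _ ≤ #(G.distSphere v 0) + ∑ i ∈ range δ, #(G.distSphere v (i + 1)) := by
        gcongr with i hi
        refine mul_pow_le_card_distSphere hdeg (lt_of_lt_of_le ?_ hgirth)
        have := mem_range.mp hi
        norm_cast
        omega
    _ = ∑ i ∈ range (δ + 1), #(G.distSphere v i) := by rw [sum_range_succ', add_comm]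
    _ ≤ Fintype.card V := sum_card_distSphere_le_card _

end SimpleGraph

theorem min_degree_girth_lower_bound_general {V : Type*} [Fintype V] [Nonempty V]
    (H : SimpleGraph V) [DecidableRel H.Adj] (d δ : ℕ)
    (hdeg : ∀ v : V, d ≤ H.degree v)
    (hgirth : (2 * δ + 1 : ℕ∞) ≤ H.egirth) :
    1 + d * ∑ i ∈ Finset.range δ, (d - 1) ^ i ≤ Fintype.card V ∧
      (d - 1) ^ δ ≤ 1 + d * ∑ i ∈ Finset.range δ, (d - 1) ^ i :=
  ⟨SimpleGraph.mooreBound_le_card hdeg hgirth, SimpleGraph.pow_le_mooreBound d δ⟩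

/-- If every vertex of a finite simple graph `H` has degree at least `d ≥ 2`,
and `H` has girth at least `2δ+1`, then `H` contains at least
`1 + d·∑_{i=0}^{δ-1} (d-1)^i ≥ (d-1)^δ` vertices. -/
theorem min_degree_girth_lower_bound {V : Type*} [Fintype V] [Nonempty V]
    (H : SimpleGraph V) [DecidableRel H.Adj] (d δ : ℕ)
    (hd : 2 ≤ d) (hδ : 1 ≤ δ)
    (hdeg : ∀ v : V, d ≤ H.degree v)
    (hgirth : (2 * δ + 1 : ℕ∞) ≤ H.egirth) :
    1 + d * ∑ i ∈ Finset.range δ, (d - 1) ^ i ≤ Fintype.card V ∧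
      (d - 1) ^ δ ≤ 1 + d * ∑ i ∈ Finset.range δ, (d - 1) ^ i :=
  min_degree_girth_lower_bound_general H d δ hdeg hgirth
end

section
/- If a finite simple graph H on n vertices has girth at least 2δ+1, then H is (⌊n^(1/δ)⌋+1)-degenerate. -/
open SimpleGraph Finset


lemma support_endpoint_or_edge {V : Type*} {G : SimpleGraph V} :
    ∀ {a b : V} (w : G.Walk a b) (y : V), y ∈ w.support → y = a ∨ ∃ z, s(z, y) ∈ w.edges := by
  intro a b w
  induction w with
  | nil => intro y hy; left; simpa using hy
  | @cons a c' b h p ih =>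
    intro y hy
    rw [Walk.support_cons, List.mem_cons] at hy
    rcases hy with rfl | hy
    · left; rfl
    · rcases ih y hy with h | ⟨z, hz⟩
      · right; exact ⟨a, by rw [h, Walk.edges_cons]; exact List.mem_cons_self⟩
      · right; exact ⟨z, by rw [Walk.edges_cons]; exact List.mem_cons_of_mem _ hz⟩

/-- In a graph of girth ≥ 2δ+1, paths of length ≤ δ between two distinct vertices are unique. -/
lemma path_unique_of_girth {V : Type*} [DecidableEq V] {G : SimpleGraph V} {δ : ℕ}
    (hg : ∀ (a : V) (w : G.Walk a a), w.IsCycle → (2 * δ + 1 : ℕ) ≤ w.length)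
    {a b : V} (hab : a ≠ b) (p q : G.Walk a b) (hp : p.IsPath) (hq : q.IsPath)
    (hpl : p.length ≤ δ) (hql : q.length ≤ δ) : p = q := by
  by_contra hne
  classical
  set E : Set (Sym2 V) := {e | e ∈ p.edges ∨ e ∈ q.edges} with hE
  set G' : SimpleGraph V := SimpleGraph.fromEdgeSet E with hG'
  have hEsub : ∀ e ∈ E, e ∈ G.edgeSet := by
    rintro e (he | he)
    · exact p.edges_subset_edgeSet he
    · exact q.edges_subset_edgeSet he
  have hmem : ∀ e ∈ E, e ∈ G'.edgeSet := by
    intro e he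
    rw [hG', edgeSet_fromEdgeSet]
    exact ⟨he, fun hd => (G.not_isDiag_of_mem_edgeSet (hEsub e he)) hd⟩
  have hpsub : ∀ e ∈ p.edges, e ∈ G'.edgeSet := fun e he => hmem e (Or.inl he)
  have hqsub : ∀ e ∈ q.edges, e ∈ G'.edgeSet := fun e he => hmem e (Or.inr he)
  have hsubG : ∀ {x y : V} (c : G'.Walk x y), ∀ e ∈ c.edges, e ∈ G.edgeSet := by
    intro x y c e he
    have := c.edges_subset_edgeSet he
    rw [hG', edgeSet_fromEdgeSet] at this
    exact hEsub e this.1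
  -- G' is not acyclic
  have hnac : ¬ G'.IsAcyclic := by
    rw [isAcyclic_iff_path_unique]
    intro h
    have := h ⟨p.transfer G' hpsub, hp.transfer hpsub⟩ ⟨q.transfer G' hqsub, hq.transfer hqsub⟩
    apply hne
    have h2 := congrArg (fun r : G'.Path a b => (r : G'.Walk a b).transfer G (hsubG _)) this
    simpa [Walk.transfer_transfer, Walk.transfer_self] using h2
  simp only [SimpleGraph.IsAcyclic, not_forall, not_not] at hnac
  obtain ⟨x, c, hcyc⟩ := hnac
  -- transfer the cycle to G and bound its length
  have hcyc' : (c.transfer G (hsubG c)).IsCycle := hcyc.transfer _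
  have hlen := hg x (c.transfer G (hsubG c)) hcyc'
  rw [Walk.length_transfer] at hlen
  -- every vertex of c lies on p or q
  have hsupp : ∀ y ∈ c.support, y ∈ p.support.toFinset ∪ q.support.toFinset := by
    intro y hy
    have : ∃ z, s(z, y) ∈ c.edges := by
      rcases support_endpoint_or_edge c y hy with rfl | h
      · cases c with
        | nil => exact absurd rfl hcyc.ne_nil
        | cons h r =>
          exact ⟨_, by rw [Walk.edges_cons]; exact List.mem_cons.mpr (Or.inl Sym2.eq_swap)⟩
      · exact h
    obtain ⟨z, hz⟩ := this
    have : s(z, y) ∈ G'.edgeSet := c.edges_subset_edgeSet hz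
    rw [hG', edgeSet_fromEdgeSet] at this
    rcases this.1 with h | h
    · exact Finset.mem_union_left _ (List.mem_toFinset.mpr (p.snd_mem_support_of_mem_edges h))
    · exact Finset.mem_union_right _ (List.mem_toFinset.mpr (q.snd_mem_support_of_mem_edges h))
  -- cardinalities
  have hnd : c.support.tail.Nodup := (Walk.isCycle_def c).mp hcyc |>.2.2
  have hclen : c.length = c.support.tail.toFinset.card := by
    rw [List.toFinset_card_of_nodup hnd, List.length_tail, Walk.length_support]
    omega
  have hsub2 : c.support.tail.toFinset ⊆ p.support.toFinset ∪ q.support.toFinset := by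
    intro y hy
    exact hsupp y (List.mem_of_mem_tail (List.mem_toFinset.mp hy))
  have hq1 : 1 ≤ q.length := by
    rcases Nat.eq_zero_or_pos q.length with h | h
    · exact absurd (Walk.eq_of_length_eq_zero h) hab
    · exact h
  have habq : ({a, b} : Finset V) ⊆ q.support.toFinset := by
    intro y hy
    simp only [Finset.mem_insert, Finset.mem_singleton] at hy
    rcases hy with rfl | rfl
    · exact List.mem_toFinset.mpr q.start_mem_support
    · exact List.mem_toFinset.mpr q.end_mem_support
  have habp : ({a, b} : Finset V) ⊆ p.support.toFinset := by
    intro y hy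
    simp only [Finset.mem_insert, Finset.mem_singleton] at hy
    rcases hy with rfl | rfl
    · exact List.mem_toFinset.mpr p.start_mem_support
    · exact List.mem_toFinset.mpr p.end_mem_support
  have hunion : p.support.toFinset ∪ q.support.toFinset ⊆
      p.support.toFinset ∪ (q.support.toFinset \ {a, b}) := by
    intro y hy
    rcases Finset.mem_union.mp hy with h | h
    · exact Finset.mem_union_left _ h
    · by_cases hy2 : y ∈ ({a, b} : Finset V)
      · exact Finset.mem_union_left _ (habp hy2)
      · exact Finset.mem_union_right _ (Finset.mem_sdiff.mpr ⟨h, hy2⟩)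
  have hcardp : p.support.toFinset.card = p.length + 1 := by
    rw [List.toFinset_card_of_nodup hp.support_nodup, Walk.length_support]
  have hcardq : q.support.toFinset.card = q.length + 1 := by
    rw [List.toFinset_card_of_nodup hq.support_nodup, Walk.length_support]
  have hcardsd : (q.support.toFinset \ ({a, b} : Finset V)).card = q.length + 1 - 2 := by
    rw [Finset.card_sdiff_of_subset habq, hcardq, Finset.card_pair hab]
  have : c.length ≤ 2 * δ := by
    calc c.length = c.support.tail.toFinset.card := hclen
    _ ≤ (p.support.toFinset ∪ (q.support.toFinset \ {a, b})).card :=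
        Finset.card_le_card (hsub2.trans hunion)
    _ ≤ p.support.toFinset.card + (q.support.toFinset \ ({a, b} : Finset V)).card :=
        Finset.card_union_le _ _
    _ ≤ 2 * δ := by rw [hcardp, hcardsd]; omega
  omega

lemma nbr_unique {V : Type*} [DecidableEq V] {G : SimpleGraph V} {δ : ℕ}
    (hg : ∀ (a : V) (w : G.Walk a a), w.IsCycle → (2 * δ + 1 : ℕ) ≤ w.length)
    {v u : V} {m : ℕ} (hm : m + 1 ≤ δ) (hmj : m ≤ G.dist v u) (hju : 0 < G.dist v u)
    {w1 w2 : V} (h1 : G.Adj u w1) (h2 : G.Adj u w2)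
    (hr1 : G.Reachable v w1) (hd1 : G.dist v w1 ≤ m)
    (hr2 : G.Reachable v w2) (hd2 : G.dist v w2 ≤ m) : w1 = w2 := by
  have huv : u ≠ v := by
    rintro rfl
    simp [SimpleGraph.dist_self] at hju
  obtain ⟨p1, hp1, hl1⟩ := hr1.exists_path_of_dist
  obtain ⟨p2, hp2, hl2⟩ := hr2.exists_path_of_dist
  have hnot : ∀ (w : V) (h : G.Adj u w) (p : G.Walk v w), p.IsPath → p.length ≤ m →
      u ∉ p.support := by
    intro w h p hp hlen hu
    have ht : G.dist v u ≤ (p.takeUntil u hu).length := SimpleGraph.dist_le _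
    have hsum : (p.takeUntil u hu).length + (p.dropUntil u hu).length = p.length := by
      rw [← Walk.length_append, Walk.take_spec]
    have hd : (p.dropUntil u hu).length = 0 := by omega
    exact h.ne (Walk.eq_of_length_eq_zero hd)
  -- build paths from u to v
  have hu1 : u ∉ p1.reverse.support := by
    rw [Walk.support_reverse, List.mem_reverse]
    exact hnot w1 h1 p1 hp1 (by omega)
  have hu2 : u ∉ p2.reverse.support := by
    rw [Walk.support_reverse, List.mem_reverse]
    exact hnot w2 h2 p2 hp2 (by omega)
  have hr1' : (Walk.cons h1 p1.reverse).IsPath := hp1.reverse.cons hu1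
  have hr2' : (Walk.cons h2 p2.reverse).IsPath := hp2.reverse.cons hu2
  have heq := path_unique_of_girth hg huv (Walk.cons h1 p1.reverse) (Walk.cons h2 p2.reverse)
    hr1' hr2'
    (by rw [Walk.length_cons, Walk.length_reverse]; omega)
    (by rw [Walk.length_cons, Walk.length_reverse]; omega)
  have := congrArg (fun w => Walk.getVert w 1) heq
  simpa [Walk.getVert_cons_succ, Walk.getVert_zero] using this

lemma min_degree_girth_card {V : Type*} [Fintype V] [DecidableEq V] (G : SimpleGraph V)
    [DecidableRel G.Adj] {k δ : ℕ} (hk : 2 ≤ k) (hδ : 1 ≤ δ) (v : V)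
    (hdeg : ∀ x : V, k ≤ G.degree x)
    (hg : ∀ (a : V) (w : G.Walk a a), w.IsCycle → (2 * δ + 1 : ℕ) ≤ w.length) :
    (k - 1) ^ δ < Fintype.card V := by
  classical
  set S : ℕ → Finset V := fun i =>
    univ.filter (fun u => G.Reachable v u ∧ G.dist v u = i) with hS
  have hmemS : ∀ i u, u ∈ S i ↔ G.Reachable v u ∧ G.dist v u = i := by
    intro i u; simp [hS]
  -- base: k ≤ (S 1).card
  have hbase : k ≤ (S 1).card := by
    refine le_trans (hdeg v) (Finset.card_le_card ?_)
    intro w hw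
    rw [mem_neighborFinset] at hw
    rw [hmemS]
    exact ⟨hw.reachable, (dist_eq_one_iff_adj).mpr hw⟩
  -- step
  have hstep : ∀ i : ℕ, 2 ≤ i → i ≤ δ → (k - 1) * (S (i-1)).card ≤ (S i).card := by
    intro i hi2 hiδ
    -- b1 : every u in S (i-1) has ≥ k-1 neighbors in S i
    have b1 : ∀ u ∈ S (i-1), k - 1 ≤ ((S i).filter (fun w => G.Adj u w)).card := by
      intro u hu
      rw [hmemS] at hu
      obtain ⟨hru, hdu⟩ := hu
      have hinter : (S i).filter (fun w => G.Adj u w) = G.neighborFinset u ∩ S i := by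
        ext w; simp only [Finset.mem_filter, Finset.mem_inter, mem_neighborFinset]; tauto
      have hsdiff : ((G.neighborFinset u) \ (S i)).card ≤ 1 := by
        rw [Finset.card_le_one]
        intro w1 hw1 w2 hw2
        have key : ∀ w, w ∈ (G.neighborFinset u) \ (S i) →
            G.Adj u w ∧ G.Reachable v w ∧ G.dist v w ≤ i - 1 := by
          intro w hw
          rw [Finset.mem_sdiff, mem_neighborFinset] at hw
          obtain ⟨hadj, hnot⟩ := hw
          have hrw : G.Reachable v w := hru.trans hadj.reachable
          have hdw : G.dist v w ≤ i := by
            obtain ⟨p, hp, hl⟩ := hru.exists_path_of_dist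
            have := SimpleGraph.dist_le (p.concat hadj)
            rw [Walk.length_concat] at this
            omega
          have hne : G.dist v w ≠ i := by
            intro h
            exact hnot ((hmemS i w).mpr ⟨hrw, h⟩)
          exact ⟨hadj, hrw, by omega⟩
        obtain ⟨ha1, hb1, hc1⟩ := key w1 hw1
        obtain ⟨ha2, hb2, hc2⟩ := key w2 hw2
        exact nbr_unique hg (m := i - 1) (by omega) (by omega)
          (by omega) ha1 ha2 hb1 hc1 hb2 hc2
      have := Finset.card_inter_add_card_sdiff (G.neighborFinset u) (S i)
      have hdeg' := hdeg u
      rw [← card_neighborFinset_eq_degree] at hdeg'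
      rw [hinter]
      omega
    -- b2 : every w in S i has ≤ 1 neighbor in S (i-1)
    have b2 : ∀ w ∈ S i, ((S (i-1)).filter (fun u => G.Adj w u)).card ≤ 1 := by
      intro w hw
      rw [hmemS] at hw
      obtain ⟨hrw, hdw⟩ := hw
      rw [Finset.card_le_one]
      intro u1 hu1 u2 hu2
      rw [Finset.mem_filter, hmemS] at hu1 hu2
      exact nbr_unique hg (m := i - 1) (by omega) (by omega) (by omega)
        hu1.2 hu2.2 hu1.1.1 (by omega) hu2.1.1 (by omega)
    -- double counting
    have hdc : ∑ u ∈ S (i-1), ((S i).filter (fun w => G.Adj u w)).card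
        = ∑ w ∈ S i, ((S (i-1)).filter (fun u => G.Adj w u)).card := by
      simp_rw [Finset.card_filter]
      rw [Finset.sum_comm]
      refine Finset.sum_congr rfl fun w _ => Finset.sum_congr rfl fun u _ => ?_
      simp only [G.adj_comm]
    calc (k - 1) * (S (i-1)).card = ∑ _u ∈ S (i-1), (k-1) := by
          rw [Finset.sum_const, smul_eq_mul, mul_comm]
    _ ≤ ∑ u ∈ S (i-1), ((S i).filter (fun w => G.Adj u w)).card :=
          Finset.sum_le_sum b1
    _ = ∑ w ∈ S i, ((S (i-1)).filter (fun u => G.Adj w u)).card := hdc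
    _ ≤ ∑ _w ∈ S i, 1 := Finset.sum_le_sum b2
    _ = (S i).card := by rw [Finset.sum_const, smul_eq_mul, mul_one]
  -- iterate
  have hiter : ∀ j : ℕ, 1 + j ≤ δ → k * (k - 1) ^ j ≤ (S (1 + j)).card := by
    intro j
    induction j with
    | zero => intro _; simpa using hbase
    | succ j ih =>
      intro hj
      have h1 := hstep (1 + (j+1)) (by omega) (by omega)
      have h2 : 1 + (j + 1) - 1 = 1 + j := by omega
      rw [h2] at h1
      calc k * (k-1)^(j+1) = (k-1) * (k * (k-1)^j) := by ring
      _ ≤ (k-1) * (S (1 + j)).card := Nat.mul_le_mul_left _ (ih (by omega))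
      _ ≤ (S (1 + (j+1))).card := h1
  have hfin := hiter (δ - 1) (by omega)
  have hδeq : 1 + (δ - 1) = δ := by omega
  rw [hδeq] at hfin
  have hcard : (S δ).card ≤ Fintype.card V := by
    rw [← Finset.card_univ]; exact Finset.card_le_card (Finset.subset_univ _)
  have hpow : (k-1)^δ < k * (k-1)^(δ-1) := by
    have : (k-1)^δ = (k-1) * (k-1)^(δ-1) := by
      rw [← pow_succ']
      congr 1
      omega
    rw [this]
    have hpos : 0 < (k-1)^(δ-1) := Nat.pow_pos (by omega)
    exact Nat.mul_lt_mul_of_lt_of_le (by omega) le_rfl hpos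
  omega


/-- A finite simple graph is `d`-degenerate if every nonempty (induced) subgraph
contains a vertex of degree at most `d` within that subgraph. -/
def Degenerate {V : Type*} [DecidableEq V] (H : SimpleGraph V) [DecidableRel H.Adj]
    (d : ℕ) : Prop :=
  ∀ s : Finset V, s.Nonempty → ∃ v ∈ s, (s.filter (fun u => H.Adj v u)).card ≤ d

/-- A finite simple graph `H` on `n` vertices with girth at least `2δ+1`
(for an integer `δ ≥ 1`) is `(⌊n^(1/δ)⌋+1)`-degenerate. -/
theorem girth_degenerate {V : Type*} [Fintype V] [DecidableEq V]
    (H : SimpleGraph V) [DecidableRel H.Adj] (n δ : ℕ)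
    (hn : Fintype.card V = n) (hδ : 1 ≤ δ)
    (hgirth : (2 * δ + 1 : ℕ∞) ≤ H.egirth) :
    Degenerate H (⌊(n : ℝ) ^ ((1 : ℝ) / δ)⌋₊ + 1) := by
  classical
  set d : ℕ := ⌊(n : ℝ) ^ ((1 : ℝ) / δ)⌋₊ + 1 with hd
  by_contra hcon
  unfold Degenerate at hcon
  push_neg at hcon
  obtain ⟨s, hs, hmin⟩ := hcon
  -- the induced graph on s
  set G : SimpleGraph {x : V // x ∈ s} := H.comap (Subtype.val) with hG
  -- degree bound
  have hdeg : ∀ x : {x : V // x ∈ s}, d + 1 ≤ G.degree x := by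
    intro x
    have hx := hmin x.val x.2
    have hcard : G.degree x = (s.filter (fun u => H.Adj x.val u)).card := by
      rw [← card_neighborFinset_eq_degree]
      apply Finset.card_bij' (fun (a : {x : V // x ∈ s}) (_ : a ∈ G.neighborFinset x) => a.val)
        (fun u hu => (⟨u, (Finset.mem_filter.mp hu).1⟩ : {x : V // x ∈ s}))
      case hi => intro a ha; rw [mem_neighborFinset] at ha; exact Finset.mem_filter.mpr ⟨a.2, ha⟩
      case hj => intro u hu; rw [mem_neighborFinset]; exact (Finset.mem_filter.mp hu).2
      case left_inv => intro a _; rfl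
      case right_inv => intro u _; rfl
    omega
  -- girth transfer to G
  have hg : ∀ (a : {x : V // x ∈ s}) (w : G.Walk a a), w.IsCycle → (2 * δ + 1 : ℕ) ≤ w.length := by
    intro a w hw
    have hemb := SimpleGraph.Embedding.comap
      (Function.Embedding.subtype (fun x : V => x ∈ s)) H
    have hcyc : (w.map hemb.toHom).IsCycle :=
      (Walk.map_isCycle_iff_of_injective hemb.injective).mpr hw
    have := le_egirth.mp hgirth _ _ hcyc
    rw [show (w.map hemb.toHom).length = w.length from Walk.length_map _ _] at this
    exact_mod_cast this
  -- apply the counting lemma with k = d + 1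
  have hne : Nonempty {x : V // x ∈ s} := ⟨⟨hs.choose, hs.choose_spec⟩⟩
  have hkey := min_degree_girth_card G (k := d + 1) (by omega) hδ hne.some hdeg hg
  have hcards : Fintype.card {x : V // x ∈ s} = s.card := Fintype.card_coe s
  have hsn : s.card ≤ n := by
    rw [← hn]; exact le_trans (Finset.card_le_card (Finset.subset_univ s)) (by rw [Finset.card_univ])
  -- real analysis: n ≤ d ^ δ
  have hfloor : (n : ℝ) ^ ((1 : ℝ) / δ) < (d : ℝ) := by
    rw [hd]
    push_cast
    exact Nat.lt_floor_add_one _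
  have hnn : (0 : ℝ) ≤ (n : ℝ) ^ ((1 : ℝ) / δ) := Real.rpow_nonneg (by positivity) _
  have hreal : (n : ℝ) ≤ (d : ℝ) ^ (δ : ℕ) := by
    have h1 : ((n : ℝ) ^ ((1 : ℝ) / δ)) ^ (δ : ℕ) = (n : ℝ) := by
      rw [← Real.rpow_natCast ((n : ℝ) ^ ((1 : ℝ) / δ)) δ, ← Real.rpow_mul (by positivity)]
      rw [one_div, inv_mul_cancel₀ (by exact_mod_cast (by omega : δ ≠ 0) : (δ : ℝ) ≠ 0)]
      exact Real.rpow_one _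
    rw [← h1]
    exact pow_le_pow_left₀ hnn hfloor.le _
  have hnat : n ≤ d ^ δ := by exact_mod_cast hreal
  have : d + 1 - 1 = d := by omega
  rw [this, hcards] at hkey
  omega
end

section
/- Let H be the subgraph produced by the greedy spanner algorithm with parameter δ: process the edges of G in some order, adding edge (u,v) to H exactly when the current distance in H between u and v exceeds 2δ. Then H has girth at least 2δ+2 (in particular, at least 2δ+1). -/
/-!
Removing the edge `s(u, v)` from a cycle through it leaves a `u`–`v` walk one edge shorter
that avoids it, so a cycle through an edge added by the greedy rule has length more than
`2δ + 1`; cycles avoiding the new edge already lie in the earlier graph.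
-/

open scoped Classical in
/-- The greedy spanner: process the given edges in order, adding an edge `(u,v)` to `H`
exactly when the current distance in `H` between `u` and `v` exceeds `2δ`
(in particular when `u` and `v` are not yet connected). -/
noncomputable def greedySpanner {V : Type*} (δ : ℕ) : List (V × V) → SimpleGraph V
  | [] => ⊥
  | e :: l =>
    let H := greedySpanner δ l
    if ¬ H.Reachable e.1 e.2 ∨ 2 * δ < H.dist e.1 e.2 then
      H ⊔ SimpleGraph.fromEdgeSet {s(e.1, e.2)}
    else H

namespace SimpleGraph

variable {V : Type*} {G : SimpleGraph V} {a u v : V}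

theorem Walk.IsTrail.exists_walk_deleteEdges_length_lt {c : G.Walk a a} (hc : c.IsTrail)
    (he : s(u, v) ∈ c.edges) :
    ∃ p : (G.deleteEdges {s(u, v)}).Walk u v, p.length < c.length := by
  classical
  have hu : u ∈ c.support := c.fst_mem_support_of_mem_edges he
  rw [← (c.rotate_edges u hu).mem_iff] at he
  rw [← Walk.isTrail_rotate hu] at hc
  rw [← Walk.length_rotate c u hu]
  generalize c.rotate u hu = c at hc he
  have hv : v ∈ c.support := c.snd_mem_support_of_mem_edges he
  have hdisj := hc.disjoint_edges_takeUntil_dropUntil hv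
  rw [← c.take_spec hv, Walk.length_append]
  rw [← c.take_spec hv, Walk.edges_append, List.mem_append] at he
  rcases he with he | he
  · have := (c.takeUntil v hv).length_edges ▸ List.length_pos_of_mem he
    refine ⟨(c.dropUntil v hv).reverse.toDeleteEdge _ (by simpa using hdisj he), ?_⟩
    simp only [Walk.length_transfer, Walk.length_reverse]
    omega
  · have := (c.dropUntil v hv).length_edges ▸ List.length_pos_of_mem he
    refine ⟨(c.takeUntil v hv).toDeleteEdge _ (fun h => hdisj h he), ?_⟩
    simp only [Walk.length_transfer]
    omega

theorem le_egirth_sup_fromEdgeSet {H : SimpleGraph V} {n : ℕ∞} (hH : n ≤ H.egirth)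
    (huv : ∀ p : H.Walk u v, n ≤ p.length + 1) :
    n ≤ (H ⊔ fromEdgeSet {s(u, v)}).egirth := by
  have hdel : (H ⊔ fromEdgeSet {s(u, v)}).deleteEdges {s(u, v)} ≤ H :=
    sup_sdiff_right_self.trans_le sdiff_le
  rw [le_egirth]
  intro a c hc
  by_cases he : s(u, v) ∈ c.edges
  · obtain ⟨p, hp⟩ := hc.isTrail.exists_walk_deleteEdges_length_lt he
    calc n ≤ (p.mapLe hdel).length + 1 := huv _
      _ ≤ c.length := by rw [Walk.length_mapLe]; exact_mod_cast hp
  · have hc' := (hc.toDeleteEdges _ {s(u, v)} fun _ h h' => he (h' ▸ h)).mapLe hdel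
    simpa using le_egirth.mp hH a _ hc'

end SimpleGraph

theorem greedySpanner_girth_general {V : Type*} (δ : ℕ)
    (l : List (V × V)) :
    (2 * δ + 2 : ℕ∞) ≤ (greedySpanner δ l).egirth := by
  induction l with
  | nil => simp [greedySpanner]
  | cons e l ih =>
    rw [greedySpanner]
    split_ifs with hfar
    · refine SimpleGraph.le_egirth_sup_fromEdgeSet ih fun p => ?_
      have hlong : 2 * δ < p.length :=
        hfar.elim (fun h => absurd ⟨p⟩ h) (fun h => h.trans_le (SimpleGraph.dist_le p))
      exact_mod_cast (by omega : 2 * δ + 2 ≤ p.length + 1)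
    · exact ih

/-- The graph `H` produced by the greedy spanner algorithm with parameter
`δ ≥ 1` has girth at least `2δ+2` (in particular at least `2δ+1`). -/
theorem greedySpanner_girth {V : Type*} [Fintype V] (δ : ℕ) (hδ : 1 ≤ δ)
    (l : List (V × V)) :
    (2 * δ + 2 : ℕ∞) ≤ (greedySpanner δ l).egirth :=
  greedySpanner_girth_general δ l
end

section
/- Let H be the output of the greedy spanner algorithm with parameter δ on a graph G with n vertices. Then H is a 2δ-approximate spanner of G, and |E(H)| ≤ 2·n^(1+1/δ). -/
/-!
An edge is added only when its endpoints are more than `2δ` apart in the current graph, so it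
closes no cycle of length `≤ 2δ + 1`: the output `H` has girth `> 2δ + 1`. An edge that is skipped
already has an `H`-detour of length `≤ 2δ`; concatenating detours along a shortest `G`-path gives
stretch `2δ`.

For sparsity: if in a graph of girth `> 2δ + 1` all vertices reachable from `x` have degree
`≥ d + 1`, the breadth-first layers around `x` grow by a factor `d` up to depth `δ` (a vertex of a
layer has no neighbour in its own layer and at most one in the previous one), so `n ≥ d ^ δ`.
For `d = ⌊n^{1/δ}⌋ + 1` this fails, so every subgraph with an edge has a non-isolated vertex of
degree `≤ d`; deleting such vertices one at a time gives `|E(H)| ≤ d n ≤ 2 n^{1 + 1/δ}`.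
-/

open Finset

namespace SimpleGraph

variable {V : Type*} {G H : SimpleGraph V} {u v w x y z a b : V} {m : ℕ}

lemma lt_edist_iff_not_reachable_or_lt_dist :
    (m : ℕ∞) < G.edist u v ↔ ¬G.Reachable u v ∨ m < G.dist u v := by
  by_cases hr : G.Reachable u v
  · simp [hr, ← hr.coe_dist_eq_edist]
  · simp [hr, edist_eq_top_of_not_reachable hr]

lemma lt_edist_iff_forall_lt_length :
    (m : ℕ∞) < G.edist u v ↔ ∀ p : G.Walk u v, m < p.length := by
  refine ⟨fun h p => by exact_mod_cast h.trans_le (edist_le p), fun h => ?_⟩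
  by_cases hr : G.Reachable u v
  · obtain ⟨p, hp⟩ := hr.exists_walk_length_eq_edist
    rw [← hp]
    exact_mod_cast h p
  · simp [edist_eq_top_of_not_reachable hr]

lemma edist_eq_natCast_iff : G.edist u v = m ↔ G.Reachable u v ∧ G.dist u v = m := by
  refine ⟨fun h => ?_, fun ⟨hr, hd⟩ => by rw [← hr.coe_dist_eq_edist, hd]⟩
  have hr : G.Reachable u v := reachable_of_edist_ne_top (by simp [h])
  exact ⟨hr, by exact_mod_cast hr.coe_dist_eq_edist.trans h⟩

lemma Walk.edist_lt_length_of_mem_support (p : G.Walk u v) (hw : w ∈ p.support) (hwv : w ≠ v) :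
    G.edist u w < p.length := by
  classical
  exact (edist_le _).trans_lt (by exact_mod_cast length_takeUntil_lt_length hw hwv)

lemma Walk.edist_le_mul_length {k : ℕ} (h : ∀ a b, G.Adj a b → H.edist a b ≤ k)
    (p : G.Walk u v) : H.edist u v ≤ k * p.length := by
  induction p with
  | nil => simp
  | cons hadj p ih =>
    calc H.edist _ _ ≤ H.edist _ _ + H.edist _ _ := SimpleGraph.edist_triangle
      _ ≤ k + k * p.length := add_le_add (h _ _ hadj) ih
      _ = k * (Walk.cons hadj p).length := by push_cast [Walk.length_cons]; ring

lemma dist_le_mul_dist_of_forall_adj {k : ℕ} (h : ∀ a b, G.Adj a b → H.edist a b ≤ k)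
    (hr : G.Reachable u v) : H.dist u v ≤ k * G.dist u v := by
  obtain ⟨p, hp⟩ := hr.exists_walk_length_eq_dist
  rw [← hp]
  exact ENat.toNat_le_of_le_natCast (by exact_mod_cast p.edist_le_mul_length h)

lemma Walk.exists_walk_or_edge_split_of_sup_edge (p : (G ⊔ edge u v).Walk a b) :
    (∃ q : G.Walk a b, q.length ≤ p.length) ∨
      ∃ x y, s(x, y) = s(u, v) ∧
        ∃ (q : G.Walk a x) (r : G.Walk y b), q.length + 1 + r.length ≤ p.length := by
  induction p with
  | nil => exact Or.inl ⟨Walk.nil, le_rfl⟩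
  | @cons a c b hac p ih =>
    rcases hac with hac | hac
    · rcases ih with ⟨q, hq⟩ | ⟨x, y, hxy, q, r, hqr⟩
      · exact Or.inl ⟨q.cons hac, by simpa using hq⟩
      · exact Or.inr ⟨x, y, hxy, q.cons hac, r, by simp; omega⟩
    · have hac' : s(a, c) = s(u, v) := by
        rw [edge_adj] at hac
        rcases hac.1 with ⟨rfl, rfl⟩ | ⟨rfl, rfl⟩
        exacts [rfl, Sym2.eq_swap]
      rcases ih with ⟨r, hr⟩ | ⟨x, y, hxy, q, r, hqr⟩
      · exact Or.inr ⟨a, c, hac', Walk.nil, r, by simp; omega⟩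
      · rcases Sym2.eq_iff.mp (hxy.trans hac'.symm) with ⟨rfl, rfl⟩ | ⟨rfl, rfl⟩
        · exact Or.inr ⟨x, y, hxy, Walk.nil, r, by simp; omega⟩
        · exact Or.inl ⟨r, by simp; omega⟩

/-- Equivalently: every cycle of `G` has length greater than `m + 1`. -/
def DetoursExceed (G : SimpleGraph V) (m : ℕ) : Prop :=
  ∀ ⦃a b : V⦄, G.Adj a b → (m : ℕ∞) < (G.deleteEdges {s(a, b)}).edist a b

lemma detoursExceed_bot (m : ℕ) : (⊥ : SimpleGraph V).DetoursExceed m :=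
  fun _ _ h => h.elim

lemma DetoursExceed.anti (hGH : G ≤ H) (hH : H.DetoursExceed m) : G.DetoursExceed m :=
  fun _ _ hab => (hH (hGH hab)).trans_le (edist_anti (deleteEdges_mono hGH))

lemma DetoursExceed.lt_length_add (hG : G.DetoursExceed m) (hab : G.Adj a b)
    (p : G.Walk x a) (q : G.Walk x b) (hb : b ∉ p.support) (ha : a ∉ q.support) :
    m < p.length + q.length := by
  have havoid : s(a, b) ∉ (p.reverse.append q).edges := by
    rw [Walk.edges_append, Walk.edges_reverse, List.mem_append, List.mem_reverse]
    rintro (h | h)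
    · exact hb (p.snd_mem_support_of_mem_edges h)
    · exact ha (q.fst_mem_support_of_mem_edges h)
  simpa using
    lt_edist_iff_forall_lt_length.mp (hG hab) ((p.reverse.append q).toDeleteEdge _ havoid)

lemma DetoursExceed.sup_edge (hG : G.DetoursExceed m) (huv : (m : ℕ∞) < G.edist u v) :
    (G ⊔ edge u v).DetoursExceed m := by
  have hlong : ∀ ⦃x y⦄, s(x, y) = s(u, v) → (m : ℕ∞) < G.edist x y := by
    intro x y h
    rcases Sym2.eq_iff.mp h with ⟨rfl, rfl⟩ | ⟨rfl, rfl⟩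
    exacts [huv, edist_comm (G := G) ▸ huv]
  intro a b hab
  by_cases hab_uv : s(a, b) = s(u, v)
  · refine (hlong hab_uv).trans_le (edist_anti fun x y hxy => ?_)
    simp only [deleteEdges_adj, sup_adj, edge_adj, Set.mem_singleton_iff, hab_uv] at hxy
    grind
  have hGab : G.Adj a b := by
    simp only [sup_adj, edge_adj] at hab
    grind
  rw [lt_edist_iff_forall_lt_length]
  intro p
  have hle : (G ⊔ edge u v).deleteEdges {s(a, b)} ≤ G.deleteEdges {s(a, b)} ⊔ edge u v := by
    intro x y hxy
    simp only [deleteEdges_adj, sup_adj] at hxy ⊢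
    tauto
  have hK : G.deleteEdges {s(a, b)} ≤ G := deleteEdges_le _
  rcases (p.mapLe hle).exists_walk_or_edge_split_of_sup_edge with ⟨q, hq⟩ | ⟨x, y, hxy, q, r, hqr⟩
  · exact (lt_edist_iff_forall_lt_length.mp (hG hGab) q).trans_le (by simpa using hq)
  · have := lt_edist_iff_forall_lt_length.mp (hlong hxy)
      ((q.mapLe hK).reverse.append (Walk.cons hGab (r.mapLe hK).reverse))
    simp only [Walk.length_append, Walk.length_reverse, Walk.length_cons, Walk.length_mapLe]
      at this hqr
    omega

section Moore

variable {δ i j k : ℕ}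

lemma DetoursExceed.not_adj_of_edist_eq (hG : G.DetoursExceed (2 * δ))
    (hy : G.edist x y = i) (hz : G.edist x z = i) (hi : i ≤ δ) : ¬G.Adj y z := by
  intro hyz
  obtain ⟨p, hp⟩ := exists_walk_of_edist_eq_coe hy
  obtain ⟨q, hq⟩ := exists_walk_of_edist_eq_coe hz
  have hzp : z ∉ p.support := fun h => by
    simpa [hz, hp] using p.edist_lt_length_of_mem_support h hyz.ne.symm
  have hyq : y ∉ q.support := fun h => by
    simpa [hy, hq] using q.edist_lt_length_of_mem_support h hyz.ne
  have := hG.lt_length_add hyz p q hzp hyq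
  omega

lemma DetoursExceed.eq_of_adj_of_adj (hG : G.DetoursExceed (2 * δ)) (hyw : G.Adj y w)
    (hzw : G.Adj z w) (hy : G.edist x y = j) (hz : G.edist x z = j)
    (hw : G.edist x w = ↑(j + 1)) (hj : j + 1 ≤ δ) : y = z := by
  by_contra hyz
  obtain ⟨p, hp⟩ := exists_walk_of_edist_eq_coe hy
  obtain ⟨q, hq⟩ := exists_walk_of_edist_eq_coe hz
  have hwp : w ∉ p.support := fun h => by
    have := p.edist_lt_length_of_mem_support h hyw.ne.symm
    rw [hw, hp] at this
    norm_cast at this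
    omega
  have hyq : y ∉ (q.concat hzw).support := by
    rw [Walk.support_concat, List.mem_append, List.mem_singleton]
    rintro (h | rfl)
    · simpa [hy, hq] using q.edist_lt_length_of_mem_support h hyz
    · exact hyw.ne rfl
  have := hG.lt_length_add hyw p (q.concat hzw) hwp hyq
  simp only [Walk.length_concat] at this
  omega

variable [Fintype V] [DecidableRel G.Adj]

lemma DetoursExceed.degree_le_card_neighborFinset_edist_succ (hG : G.DetoursExceed (2 * δ))
    (hy : G.edist x y = i) (hi : i < δ) :
    G.degree y ≤ #{b ∈ G.neighborFinset y | G.edist x b = ↑(i + 1)} + 1 := by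
  classical
  obtain ⟨hry, hdy⟩ := edist_eq_natCast_iff.mp hy
  have hedist : ∀ b, G.Adj y b → G.edist x b = G.dist x b := fun b hb =>
    (hry.trans hb.reachable).coe_dist_eq_edist.symm
  have hparent : ∀ b, G.Adj y b → G.edist x b ≠ ↑(i + 1) → G.dist x b + 1 = i := by
    intro b hb hbi
    have hbi' : G.dist x b ≠ i := fun h =>
      hG.not_adj_of_edist_eq hy (by rw [hedist b hb, h]) hi.le hb
    rw [hedist b hb] at hbi
    norm_cast at hbi
    rcases hb.diff_dist_adj (u := x) with h | h | h <;> omega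
  have hsub : G.neighborFinset y ⊆ {b ∈ G.neighborFinset y | G.edist x b = ↑(i + 1)} ∪
      {b ∈ G.neighborFinset y | G.dist x b + 1 = i} := by
    intro b hb
    rw [mem_union, mem_filter, mem_filter]
    by_cases hbi : G.edist x b = ↑(i + 1)
    · exact Or.inl ⟨hb, hbi⟩
    · exact Or.inr ⟨hb, hparent b ((G.mem_neighborFinset y b).mp hb) hbi⟩
  have hone : #{b ∈ G.neighborFinset y | G.dist x b + 1 = i} ≤ 1 := by
    refine card_le_one.mpr fun b hb c hc => ?_
    rw [mem_filter, mem_neighborFinset] at hb hc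
    refine hG.eq_of_adj_of_adj hb.1.symm hc.1.symm (hedist b hb.1) ?_ ?_ (by omega)
    · rw [hedist c hc.1]
      exact_mod_cast (by omega : G.dist x c = G.dist x b)
    · rw [hy]
      exact_mod_cast (by omega : i = G.dist x b + 1)
  rw [← card_neighborFinset_eq_degree]
  exact (card_le_card hsub).trans ((card_union_le _ _).trans (by omega))

theorem DetoursExceed.pow_le_card (hG : G.DetoursExceed (2 * δ)) (x : V)
    (hdeg : ∀ v, G.Reachable x v → k + 1 ≤ G.degree v) : k ^ δ ≤ Fintype.card V := by
  classical
  let layer (i : ℕ) : Finset V := {w | G.edist x w = i}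
  have hgrow : ∀ i < δ, #(layer i) * k ≤ #(layer (i + 1)) * 1 := by
    intro i hi
    refine card_mul_le_card_mul G.Adj (fun y hy => ?_) (fun w hw => ?_)
    · have hy : G.edist x y = i := (mem_filter.mp hy).2
      have hchildren : {b ∈ G.neighborFinset y | G.edist x b = ↑(i + 1)} =
          bipartiteAbove G.Adj (layer (i + 1)) y := by
        ext b
        simp [bipartiteAbove, layer, and_comm]
      have hupper := hG.degree_le_card_neighborFinset_edist_succ hy hi
      rw [hchildren] at hupper
      have := hdeg y (edist_eq_natCast_iff.mp hy).1
      omega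
    · refine card_le_one.mpr fun a ha b hb => ?_
      simp only [bipartiteBelow, layer, mem_filter, mem_univ, true_and] at ha hb hw
      exact hG.eq_of_adj_of_adj ha.2 hb.2 ha.1 hb.1 hw hi
  have hlayer : ∀ i ≤ δ, k ^ i ≤ #(layer i) := by
    intro i hi
    induction i with
    | zero => exact card_pos.mpr ⟨x, by simp [layer]⟩
    | succ i ih =>
      calc k ^ (i + 1) = k ^ i * k := pow_succ k i
        _ ≤ #(layer i) * k := Nat.mul_le_mul_right k (ih (by omega))
        _ ≤ #(layer (i + 1)) := by simpa using hgrow i hi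
  exact (hlayer δ le_rfl).trans (card_le_univ _)

lemma DetoursExceed.exists_degree_le (hG : G.DetoursExceed (2 * δ))
    (hcard : Fintype.card V < k ^ δ) (hE : G.edgeSet.Nonempty) :
    ∃ x ∈ G.support, G.degree x ≤ k := by
  obtain ⟨⟨a, b⟩, hab⟩ := hE
  have ha : a ∈ G.support := ⟨b, hab⟩
  by_contra! hlow
  refine (hG.pow_le_card a fun v hav => hlow v ?_).not_gt hcard
  rcases eq_or_ne v a with rfl | hva
  exacts [ha, mem_support_of_reachable hva hav.symm]

end Moore

theorem card_edgeFinset_le_mul_card_support [Fintype V] [DecidableEq V] [DecidableRel G.Adj]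
    {d : ℕ} (hlow : ∀ H ≤ G, ∀ [DecidableRel H.Adj], H.edgeSet.Nonempty →
      ∃ x ∈ H.support, H.degree x ≤ d) :
    #G.edgeFinset ≤ d * Fintype.card G.support := by
  induction hs : Fintype.card G.support using Nat.strong_induction_on generalizing G with
  | _ s ih =>
  rcases G.edgeSet.eq_empty_or_nonempty with hE | hE
  · simp [edgeFinset, hE]
  obtain ⟨x, hx, hdx⟩ := hlow G le_rfl hE
  have hsupp := card_support_deleteIncidenceSet G hx
  have hpos : 0 < Fintype.card G.support := Fintype.card_pos_iff.mpr ⟨⟨x, hx⟩⟩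
  have hrest := ih _ (by omega) (G := G.deleteIncidenceSet x)
    (fun H hH => hlow H (hH.trans (deleteIncidenceSet_le G x))) rfl
  rw [card_edgeFinset_deleteIncidenceSet] at hrest
  have hdeg : G.degree x ≤ #G.edgeFinset := by
    rw [← card_incidenceFinset_eq_degree]
    exact card_le_card (incidenceFinset_subset G x)
  calc #G.edgeFinset ≤ d * Fintype.card (G.deleteIncidenceSet x).support + d := by omega
    _ = d * (Fintype.card (G.deleteIncidenceSet x).support + 1) := by ring
    _ ≤ d * s := Nat.mul_le_mul_left d (by omega)

theorem DetoursExceed.card_edgeFinset_le [Fintype V] [DecidableRel G.Adj] {δ d : ℕ}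
    (hG : G.DetoursExceed (2 * δ)) (hcard : Fintype.card V < d ^ δ) :
    #G.edgeFinset ≤ d * Fintype.card V := by
  classical
  calc #G.edgeFinset ≤ d * Fintype.card G.support :=
        card_edgeFinset_le_mul_card_support fun H hH _ => (hG.anti hH).exists_degree_le hcard
    _ ≤ d * Fintype.card V := Nat.mul_le_mul_left d (Fintype.card_subtype_le _)

end SimpleGraph

open SimpleGraph

section Greedy

variable {V : Type*} {δ : ℕ} {e : V × V} {l : List (V × V)}

lemma greedySpanner_cons_of_lt (h : ((2 * δ : ℕ) : ℕ∞) < (greedySpanner δ l).edist e.1 e.2) :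
    greedySpanner δ (e :: l) = greedySpanner δ l ⊔ edge e.1 e.2 := by
  rw [greedySpanner, if_pos (lt_edist_iff_not_reachable_or_lt_dist.mp h)]
  rfl

lemma greedySpanner_cons_of_le (h : (greedySpanner δ l).edist e.1 e.2 ≤ ((2 * δ : ℕ) : ℕ∞)) :
    greedySpanner δ (e :: l) = greedySpanner δ l := by
  rw [greedySpanner, if_neg (lt_edist_iff_not_reachable_or_lt_dist.not.mp h.not_gt)]

lemma greedySpanner_le_cons : greedySpanner δ l ≤ greedySpanner δ (e :: l) := by
  rcases lt_or_ge ((2 * δ : ℕ) : ℕ∞) ((greedySpanner δ l).edist e.1 e.2) with h | h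
  · exact (greedySpanner_cons_of_lt h).ge.trans' le_sup_left
  · exact (greedySpanner_cons_of_le h).ge

lemma greedySpanner_le {G : SimpleGraph V} (hmem : ∀ e ∈ l, G.Adj e.1 e.2) :
    greedySpanner δ l ≤ G := by
  induction l with
  | nil => exact bot_le
  | cons f l ih =>
    have ih := ih fun e he => hmem e (List.mem_cons_of_mem f he)
    rcases lt_or_ge ((2 * δ : ℕ) : ℕ∞) ((greedySpanner δ l).edist f.1 f.2) with h | h
    · rw [greedySpanner_cons_of_lt h]
      exact sup_le ih ((edge_le_iff G).mpr (Or.inr (hmem f List.mem_cons_self)))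
    · rwa [greedySpanner_cons_of_le h]

lemma greedySpanner_detoursExceed (δ : ℕ) (l : List (V × V)) :
    (greedySpanner δ l).DetoursExceed (2 * δ) := by
  induction l with
  | nil => exact detoursExceed_bot _
  | cons f l ih =>
    rcases lt_or_ge ((2 * δ : ℕ) : ℕ∞) ((greedySpanner δ l).edist f.1 f.2) with h | h
    · rw [greedySpanner_cons_of_lt h]
      exact ih.sup_edge h
    · rwa [greedySpanner_cons_of_le h]

lemma greedySpanner_edist_le (hδ : 1 ≤ δ) (he : e ∈ l) :
    (greedySpanner δ l).edist e.1 e.2 ≤ ↑(2 * δ) := by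
  induction l with
  | nil => simp at he
  | cons f l ih =>
    rcases List.mem_cons.mp he with rfl | he
    · rcases lt_or_ge ((2 * δ : ℕ) : ℕ∞) ((greedySpanner δ l).edist e.1 e.2) with h | h
      · rw [greedySpanner_cons_of_lt h]
        calc _ ≤ 1 := edist_le_one_iff_adj_or_eq.mpr (by rw [sup_adj, edge_adj]; tauto)
          _ ≤ ↑(2 * δ) := by exact_mod_cast (by omega : 1 ≤ 2 * δ)
      · rwa [greedySpanner_cons_of_le h]
    · exact (edist_anti greedySpanner_le_cons).trans (ih he)

end Greedy

lemma nthRoot_add_one_mul_le_two_mul_rpow (n δ : ℕ) (hδ : δ ≠ 0) :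
    ((Nat.nthRoot δ n + 1 : ℕ) * n : ℝ) ≤ 2 * (n : ℝ) ^ ((1 : ℝ) + 1 / δ) := by
  rcases Nat.eq_zero_or_pos n with rfl | hn
  · simp only [CharP.cast_eq_zero, mul_zero]
    positivity
  have hn1 : (1 : ℝ) ≤ n := by exact_mod_cast hn
  have hroot : (Nat.nthRoot δ n : ℝ) ≤ (n : ℝ) ^ (1 / δ : ℝ) := by
    have hpow : ((Nat.nthRoot δ n : ℝ) ^ δ) ≤ n := by
      exact_mod_cast Nat.pow_nthRoot_le_iff.mpr (Or.inl hδ)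
    calc (Nat.nthRoot δ n : ℝ) = ((Nat.nthRoot δ n : ℝ) ^ δ) ^ (1 / δ : ℝ) := by
          rw [one_div, Real.pow_rpow_inv_natCast (by positivity) hδ]
      _ ≤ (n : ℝ) ^ (1 / δ : ℝ) := Real.rpow_le_rpow (by positivity) hpow (by positivity)
  have hone : (1 : ℝ) ≤ (n : ℝ) ^ (1 / δ : ℝ) := Real.one_le_rpow hn1 (by positivity)
  calc ((Nat.nthRoot δ n + 1 : ℕ) * n : ℝ) ≤ (2 * (n : ℝ) ^ (1 / δ : ℝ)) * n := by
        push_cast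
        gcongr
        linarith
    _ = 2 * (n : ℝ) ^ ((1 : ℝ) + 1 / δ) := by
        rw [Real.rpow_add (by positivity), Real.rpow_one]
        ring

/-- If `l` enumerates the edges of `G` (each edge of `G` occurring in at
least one orientation, and every listed pair being an edge of `G`), then the output `H`
of the greedy spanner algorithm with parameter `δ ≥ 1` is a subgraph of `G` which is a
`2δ`-approximate spanner of `G`, and `|E(H)| ≤ 2·n^(1+1/δ)` where `n = |V|`. -/
theorem greedySpanner_spanner_and_sparse {V : Type*} [Fintype V] (G : SimpleGraph V)
    (n δ : ℕ) (hn : Fintype.card V = n) (hδ : 1 ≤ δ) (l : List (V × V))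
    (hmem : ∀ e ∈ l, G.Adj e.1 e.2)
    (hcover : ∀ u v : V, G.Adj u v → (u, v) ∈ l ∨ (v, u) ∈ l) :
    greedySpanner δ l ≤ G ∧
      (∀ u v : V, G.Reachable u v →
        (greedySpanner δ l).dist u v ≤ 2 * δ * G.dist u v) ∧
      ((greedySpanner δ l).edgeSet.ncard : ℝ) ≤ 2 * (n : ℝ) ^ ((1 : ℝ) + 1 / δ) := by
  classical
  subst hn
  have hspan : ∀ a b, G.Adj a b → (greedySpanner δ l).edist a b ≤ ↑(2 * δ) := by
    intro a b hab
    rcases hcover a b hab with h | h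
    · exact greedySpanner_edist_le hδ h
    · rw [edist_comm]
      exact greedySpanner_edist_le hδ h
  refine ⟨greedySpanner_le hmem, fun u v huv => dist_le_mul_dist_of_forall_adj hspan huv, ?_⟩
  have hcard := (greedySpanner_detoursExceed δ l).card_edgeFinset_le
    (Nat.lt_pow_nthRoot_add_one (by omega) (Fintype.card V))
  rw [← coe_edgeFinset, Set.ncard_coe_finset]
  calc (#(greedySpanner δ l).edgeFinset : ℝ)
      ≤ ((Nat.nthRoot δ (Fintype.card V) + 1 : ℕ) * Fintype.card V : ℝ) := by exact_mod_cast hcard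
    _ ≤ _ := nthRoot_add_one_mul_le_two_mul_rpow _ δ (by omega)
end
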